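/- arXiv:2301.06495 — 4 statements merged into one kernel-verified Lean document; each statement's English description precedes it below -/
import Mathlib

section
/- Let (a_n)_{n≥1} be a sequence of positive integers and let α be a real number with α > 2 such that a_{n+1} > a_n^{α+1} for all n ≥ 1. Let θ = ∑_{n=1}^∞ 1/a_n, and for m ≥ 1 write ∑_{k=1}^m 1/a_k = p_m/q_m in lowest terms. Then with b_m = (a_1·a_2·…·a_m)^α / a_{m+1}, one has q_m^α · |θ − p_m/q_m| < b_m·(1 + θ) for all m ≥ 1. -/
/-!
The denominator `q_m` of a sum of unit fractions divides `a_1 ⋯ a_m`, so it suffices to bound the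
tail `θ - p_m/q_m = ∑_{n > m} 1/a_n` by `(1 + θ)/a_{m+1}`. The growth condition gives
`a_i a_j < a_{i+j}` (both factors are at most `a_{i+j-1}`, and `a_{i+j-1}^2 ≤ a_{i+j-1}^{α+1}`),
so after its first term the tail is termwise below `(1/a_{m+1}) ∑_n 1/a_n = θ/a_{m+1}`.
-/

open Finset

theorem Rat.den_sum_one_div_dvd_prod {ι : Type*} (s : Finset ι) (a : ι → ℕ) :
    (∑ k ∈ s, (1 : ℚ) / a k).den ∣ ∏ k ∈ s, a k :=
  (Rat.den_sum_dvd_prod_den s _).trans <| prod_dvd_prod_of_dvd _ _ fun k _ => by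
    rw [one_div, Rat.inv_natCast_den]
    split_ifs with h <;> simp [h]

section RpowGrowth

variable {b : ℕ → ℕ} {α : ℝ}

theorem strictMono_of_rpow_growth (hb : ∀ n, 0 < b n) (hα : 0 ≤ α)
    (hgrow : ∀ n, (b n : ℝ) ^ (α + 1) < b (n + 1)) : StrictMono b :=
  strictMono_nat_of_lt_succ fun n => by
    have h := (Real.self_le_rpow_of_one_le (by exact_mod_cast hb n) (by linarith)).trans_lt
      (hgrow n)
    exact_mod_cast h

theorem mul_lt_of_rpow_growth (hb : ∀ n, 0 < b n) (hα : 1 ≤ α)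
    (hgrow : ∀ n, (b n : ℝ) ^ (α + 1) < b (n + 1)) (i j : ℕ) : b i * b j < b (i + j + 1) := by
  have hmono := (strictMono_of_rpow_growth hb (by linarith) hgrow).monotone
  have hone : (1 : ℝ) ≤ b (i + j) := by exact_mod_cast hb (i + j)
  have h : (b i * b j : ℝ) < b (i + j + 1) :=
    calc (b i * b j : ℝ) ≤ b (i + j) ^ (2 : ℝ) := by
          rw [Real.rpow_two, sq]
          gcongr <;> exact_mod_cast hmono (by omega)
      _ ≤ b (i + j) ^ (α + 1) := Real.rpow_le_rpow_of_exponent_le hone (by linarith)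
      _ < b (i + j + 1) := hgrow _
  exact_mod_cast h

end RpowGrowth

theorem tail_sum_one_div_lt {b : ℕ → ℕ} (hb : ∀ n, 0 < b n)
    (hmul : ∀ i j, b i * b j < b (i + j + 1)) {θ : ℝ}
    (hθ : HasSum (fun n => 1 / (b n : ℝ)) θ) (m : ℕ) :
    θ - ∑ i ∈ range m, 1 / (b i : ℝ) < (1 + θ) / b m := by
  have hbR : ∀ n, (0 : ℝ) < b n := fun n => by exact_mod_cast hb n
  have hterm : ∀ n, 1 / (b (n + (m + 1)) : ℝ) < 1 / (b n : ℝ) / b m := fun n => by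
    rw [div_div, ← Nat.cast_mul]
    exact one_div_lt_one_div_of_lt (Nat.cast_pos.mpr (mul_pos (hb n) (hb m)))
      (by rw [show n + (m + 1) = n + m + 1 by omega]; exact_mod_cast hmul n m)
  have hremote : θ - ∑ i ∈ range (m + 1), 1 / (b i : ℝ) < θ / b m :=
    hasSum_lt (fun n => (hterm n).le) (hterm 0) ((hasSum_nat_add_iff' (m + 1)).mpr hθ)
      (hθ.div_const _)
  rw [sum_range_succ] at hremote
  rw [add_div, one_div]
  linarith [one_div (b m : ℝ)]

/-- With `(a_n)`, `α` as before, `θ = ∑_{n=1}^∞ 1/a_n`, `p_m/q_m` the `m`-th partial sum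
in lowest terms and `b_m = (a_1 ⋯ a_m)^α / a_{m+1}`, one has
`q_m^α * |θ - p_m/q_m| < b_m * (1 + θ)` for all `m ≥ 1`. -/
theorem stmt_4 (a : ℕ → ℕ) (ha : ∀ n, 1 ≤ n → 0 < a n) (α : ℝ) (hα : 2 < α)
    (hgrow : ∀ n, 1 ≤ n → (a n : ℝ) ^ (α + 1) < (a (n + 1) : ℝ))
    (θ : ℝ) (hθ : HasSum (fun n : ℕ => (1 : ℝ) / (a (n + 1) : ℝ)) θ) :
    ∀ m, 1 ≤ m →
      ((((∑ k ∈ Finset.Icc 1 m, (1 : ℚ) / (a k : ℚ)).den : ℝ)) ^ α) *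
          |θ - ((∑ k ∈ Finset.Icc 1 m, (1 : ℚ) / (a k : ℚ) : ℚ) : ℝ)| <
        ((∏ k ∈ Finset.Icc 1 m, (a k : ℝ)) ^ α / (a (m + 1) : ℝ)) * (1 + θ) := by
  intro m _
  have hb : ∀ n, 0 < a (n + 1) := fun n => ha _ n.succ_pos
  have hmul := mul_lt_of_rpow_growth hb (by linarith) fun n => hgrow _ n.succ_pos
  have hpartial :
      ((∑ k ∈ Icc 1 m, (1 : ℚ) / a k : ℚ) : ℝ) = ∑ i ∈ range m, 1 / (a (i + 1) : ℝ) := by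
    push_cast
    rw [range_eq_Ico, sum_Ico_add' fun k => 1 / (a k : ℝ)]
    rfl
  have htail_nonneg : 0 ≤ θ - ∑ i ∈ range m, 1 / (a (i + 1) : ℝ) :=
    ((hasSum_nat_add_iff' m).mpr hθ).nonneg fun n => by positivity
  have hprod : 0 < ∏ k ∈ Icc 1 m, a k := prod_pos fun k hk => ha k (mem_Icc.mp hk).1
  have hden : ((∑ k ∈ Icc 1 m, (1 : ℚ) / a k).den : ℝ) ≤ ∏ k ∈ Icc 1 m, (a k : ℝ) := by
    exact_mod_cast Nat.le_of_dvd hprod (Rat.den_sum_one_div_dvd_prod _ a)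
  rw [hpartial, abs_of_nonneg htail_nonneg, div_mul_eq_mul_div, mul_div_assoc]
  calc _ ≤ (∏ k ∈ Icc 1 m, (a k : ℝ)) ^ α * (θ - ∑ i ∈ range m, 1 / (a (i + 1) : ℝ)) := by
        gcongr
    _ < _ := mul_lt_mul_of_pos_left (tail_sum_one_div_lt hb hmul hθ m)
        (Real.rpow_pos_of_pos (by exact_mod_cast hprod) α)
end

section
/- Let (a_n)_{n≥1} be a sequence of positive integers and let α be a real number with α > 2 such that a_{n+1} > a_n^{α+1} for all n ≥ 1. Let θ = ∑_{n=1}^∞ 1/a_n, and for m ≥ 1 write ∑_{k=1}^m 1/a_k = p_m/q_m in lowest terms. Then for all sufficiently large m, |θ − p_m/q_m| < 1/q_m^α. -/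
/-!
Since `q_m` divides `a_1 ⋯ a_m`, it suffices to beat `(a_1 ⋯ a_m)^(-α)`. The growth condition
gives `2 (a_1 ⋯ a_m)^α ≤ a_m^α · a_m < a_{m+1}` inductively, while `a_{k+1} ≥ 4 a_k` for `k ≥ 2`
bounds the tail `θ - p_m/q_m` by a geometric series: it is at most `(4/3)/a_{m+1} < 2/a_{m+1}`.
-/

theorem Rat.den_sum_dvd_prod_den {ι : Type*} (s : Finset ι) (f : ι → ℚ) :
    (∑ i ∈ s, f i).den ∣ ∏ i ∈ s, (f i).den := by
  induction s using Finset.cons_induction with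
  | empty => simp
  | cons i s hi ih =>
    rw [Finset.sum_cons, Finset.prod_cons]
    exact (Rat.add_den_dvd _ _).trans (Nat.mul_dvd_mul_left _ ih)

theorem Rat.den_sum_one_div_natCast_dvd_prod {ι : Type*} (s : Finset ι) (f : ι → ℕ) :
    (∑ i ∈ s, 1 / (f i : ℚ)).den ∣ ∏ i ∈ s, f i :=
  (Rat.den_sum_dvd_prod_den s _).trans <| Finset.prod_dvd_prod_of_dvd _ _ fun i _ ↦ by
    rw [one_div, Rat.inv_natCast_den]
    split_ifs with h <;> simp [h]

theorem sub_sum_Icc_eq_tsum {f : ℕ → ℝ} {θ : ℝ} (hθ : HasSum (fun n ↦ f (n + 1)) θ) (m : ℕ) :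
    θ - ∑ k ∈ Finset.Icc 1 m, f k = ∑' i, f (i + m + 1) := by
  rw [← hθ.tsum_eq, ← hθ.summable.sum_add_tsum_nat_add m, Finset.range_eq_Ico,
    ← Finset.Ico_add_one_right_eq_Icc, Finset.sum_Ico_add' f, zero_add, add_sub_cancel_left]

theorem tsum_le_div_one_sub_of_le_mul {f : ℕ → ℝ} {r : ℝ} (hr₀ : 0 ≤ r) (hr₁ : r < 1)
    (hf : Summable f) (h : ∀ n, f (n + 1) ≤ r * f n) : ∑' n, f n ≤ f 0 / (1 - r) := by
  have hle : ∀ n, f n ≤ f 0 * r ^ n := by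
    intro n
    induction n with
    | zero => simp
    | succ n ih => calc
        f (n + 1) ≤ r * f n := h n
        _ ≤ r * (f 0 * r ^ n) := mul_le_mul_of_nonneg_left ih hr₀
        _ = f 0 * r ^ (n + 1) := by ring
  calc ∑' n, f n ≤ ∑' n, f 0 * r ^ n :=
        hf.tsum_le_tsum hle ((summable_geometric_of_lt_one hr₀ hr₁).mul_left _)
    _ = f 0 / (1 - r) := by rw [tsum_mul_left, tsum_geometric_of_lt_one hr₀ hr₁, div_eq_mul_inv]

theorem four_mul_le_rpow_add_one {x α : ℝ} (hx : 2 ≤ x) (hα : 2 ≤ α) :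
    4 * x ≤ x ^ (α + 1) := by
  have hx2 : x ^ (2 : ℝ) ≤ x ^ α := Real.rpow_le_rpow_of_exponent_le (by linarith) hα
  rw [Real.rpow_add_one (by positivity), Real.rpow_two] at *
  nlinarith

theorem two_mul_rpow_le_of_rpow_add_one_lt {x y : ℕ} {α : ℝ} (hx : 0 < x)
    (h : (x : ℝ) ^ (α + 1) < y) : 2 * (x : ℝ) ^ α ≤ y := by
  rcases (Nat.one_le_iff_ne_zero.mpr hx.ne').eq_or_lt with rfl | hx2
  · have : 1 < y := by exact_mod_cast (by simpa using h : (1 : ℝ) < y)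
    simpa using (show (2 : ℝ) ≤ y by exact_mod_cast this)
  · have hx2' : (2 : ℝ) ≤ x := by exact_mod_cast hx2
    rw [Real.rpow_add_one (by positivity)] at h
    nlinarith [Real.rpow_nonneg (Nat.cast_nonneg x) α]

section Growth

variable {a : ℕ → ℕ} {α : ℝ}

theorem two_le_of_rpow_lt (ha : ∀ n, 1 ≤ n → 0 < a n) (hα : -1 ≤ α)
    (hgrow : ∀ n, 1 ≤ n → (a n : ℝ) ^ (α + 1) < a (n + 1)) {n : ℕ} (hn : 2 ≤ n) : 2 ≤ a n := by
  obtain ⟨k, rfl⟩ := Nat.exists_eq_add_of_le' hn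
  have h1 : (1 : ℝ) ≤ (a (k + 1) : ℝ) ^ (α + 1) :=
    Real.one_le_rpow (by exact_mod_cast ha (k + 1) (by omega)) (by linarith)
  exact_mod_cast h1.trans_lt (hgrow (k + 1) (by omega))

theorem four_mul_le_of_rpow_lt (ha : ∀ n, 1 ≤ n → 0 < a n) (hα : 2 ≤ α)
    (hgrow : ∀ n, 1 ≤ n → (a n : ℝ) ^ (α + 1) < a (n + 1)) {n : ℕ} (hn : 2 ≤ n) :
    4 * (a n : ℝ) ≤ a (n + 1) :=
  (four_mul_le_rpow_add_one (mod_cast two_le_of_rpow_lt ha (by linarith) hgrow hn) hα).trans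
    (hgrow n (by omega)).le

theorem two_mul_prod_rpow_le_of_rpow_lt (ha : ∀ n, 1 ≤ n → 0 < a n)
    (hgrow : ∀ n, 1 ≤ n → (a n : ℝ) ^ (α + 1) < a (n + 1)) {m : ℕ} (hm : 1 ≤ m) :
    2 * (∏ k ∈ Finset.Icc 1 m, (a k : ℝ)) ^ α ≤ a (m + 1) := by
  induction m, hm using Nat.le_induction with
  | base => simpa using two_mul_rpow_le_of_rpow_add_one_lt (ha 1 le_rfl) (hgrow 1 le_rfl)
  | succ m hm ih =>
    have ham : (0 : ℝ) ≤ a (m + 1) := Nat.cast_nonneg _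
    rw [Finset.prod_Icc_succ_top (by omega), Real.mul_rpow (by positivity) ham]
    calc 2 * ((∏ k ∈ Finset.Icc 1 m, (a k : ℝ)) ^ α * (a (m + 1) : ℝ) ^ α)
        ≤ a (m + 1) * (a (m + 1) : ℝ) ^ α := by
          rw [← mul_assoc]; exact mul_le_mul_of_nonneg_right ih (by positivity)
      _ = (a (m + 1) : ℝ) ^ (α + 1) := by
          rw [Real.rpow_add_one (by exact_mod_cast (ha (m + 1) (by omega)).ne'), mul_comm]
      _ ≤ a (m + 1 + 1) := (hgrow (m + 1) (by omega)).le

theorem tsum_one_div_tail_le_of_rpow_lt (ha : ∀ n, 1 ≤ n → 0 < a n) (hα : 2 ≤ α)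
    (hgrow : ∀ n, 1 ≤ n → (a n : ℝ) ^ (α + 1) < a (n + 1))
    (hs : Summable fun n ↦ 1 / (a (n + 1) : ℝ)) {m : ℕ} (hm : 1 ≤ m) :
    ∑' i, 1 / (a (i + m + 1) : ℝ) ≤ 4 / 3 / a (m + 1) := by
  have hratio (i : ℕ) : 1 / (a (i + 1 + m + 1) : ℝ) ≤ 1 / 4 * (1 / a (i + m + 1)) := by
    have hpos : (0 : ℝ) < a (i + m + 1) := by exact_mod_cast ha _ (by omega)
    have h4 := four_mul_le_of_rpow_lt ha hα hgrow (n := i + m + 1) (by omega)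
    rw [show i + 1 + m + 1 = i + m + 1 + 1 by omega, div_mul_div_comm, one_mul]
    exact one_div_le_one_div_of_le (by positivity) h4
  have := tsum_le_div_one_sub_of_le_mul (by norm_num) (by norm_num)
    ((summable_nat_add_iff m).mpr hs) hratio
  convert this using 1
  simp only [zero_add]
  ring

end Growth

/-- With `(a_n)`, `α` as before, `θ = ∑_{n=1}^∞ 1/a_n` and `p_m/q_m` the `m`-th partial
sum in lowest terms, one has `|θ - p_m/q_m| < 1/q_m^α` for all sufficiently large `m`. -/
theorem stmt_5 (a : ℕ → ℕ) (ha : ∀ n, 1 ≤ n → 0 < a n) (α : ℝ) (hα : 2 < α)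
    (hgrow : ∀ n, 1 ≤ n → (a n : ℝ) ^ (α + 1) < (a (n + 1) : ℝ))
    (θ : ℝ) (hθ : HasSum (fun n : ℕ => (1 : ℝ) / (a (n + 1) : ℝ)) θ) :
    ∃ M : ℕ, ∀ m, M ≤ m →
      |θ - ((∑ k ∈ Finset.Icc 1 m, (1 : ℚ) / (a k : ℚ) : ℚ) : ℝ)| <
        1 / (((∑ k ∈ Finset.Icc 1 m, (1 : ℚ) / (a k : ℚ)).den : ℝ)) ^ α := by
  refine ⟨1, fun m hm ↦ ?_⟩
  set s := ∑ k ∈ Finset.Icc 1 m, (1 : ℚ) / (a k : ℚ)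
  have hcast : (s : ℝ) = ∑ k ∈ Finset.Icc 1 m, 1 / (a k : ℝ) := by push_cast [s]; rfl
  have hden : (s.den : ℝ) ≤ ∏ k ∈ Finset.Icc 1 m, (a k : ℝ) := by
    exact_mod_cast Nat.le_of_dvd (Finset.prod_pos fun k hk ↦ ha k (Finset.mem_Icc.mp hk).1)
      (Rat.den_sum_one_div_natCast_dvd_prod _ a)
  have hq : 2 * (s.den : ℝ) ^ α ≤ a (m + 1) :=
    (two_mul_prod_rpow_le_of_rpow_lt ha hgrow hm).trans' (by gcongr)
  have hA : (0 : ℝ) < a (m + 1) := by exact_mod_cast ha (m + 1) (by omega)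
  rw [hcast, sub_sum_Icc_eq_tsum (f := fun k ↦ 1 / (a k : ℝ)) hθ,
    abs_of_nonneg (tsum_nonneg fun _ ↦ by positivity)]
  calc ∑' i, 1 / (a (i + m + 1) : ℝ)
      ≤ 4 / 3 / a (m + 1) := tsum_one_div_tail_le_of_rpow_lt ha hα.le hgrow hθ.summable hm
    _ < 2 / a (m + 1) := by gcongr; norm_num
    _ ≤ 1 / (s.den : ℝ) ^ α := by
      rw [div_le_div_iff₀ hA (by positivity)]
      linarith
end

section
/- Let (a_n)_{n≥1} be a sequence of positive integers and let α > 1 be a real number such that a_n^{α+1} ≤ a_{n+1} for all n ≥ 1. For m ≥ 1 write ∑_{k=1}^m 1/a_k = p_m/q_m in lowest terms. Then q_n ≤ a_n^{(α+1)/α} for all n ≥ 1. -/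
/-! Since `p_{n+1}/q_{n+1} = p_n/q_n + 1/a_{n+1}`, the denominator `q_{n+1}` divides
`q_n a_{n+1}`. With `β = (α+1)/α`, the growth condition gives `a_n^β ≤ a_{n+1}^{1/α}`, so the
bound `q_n ≤ a_n^β` propagates: `q_{n+1} ≤ a_n^β a_{n+1} ≤ a_{n+1}^{1/α + 1} = a_{n+1}^β`. -/

open Finset

theorem Rat.den_add_inv_natCast_le (q : ℚ) {m : ℕ} (hm : 0 < m) :
    (q + (m : ℚ)⁻¹).den ≤ q.den * m := by
  apply Nat.le_of_dvd (Nat.mul_pos q.den_pos hm)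
  simpa only [Rat.inv_natCast_den_of_pos hm] using Rat.add_den_dvd q (m : ℚ)⁻¹

theorem den_sum_Icc_inv_succ_le (a : ℕ → ℕ) {n : ℕ} (hn : 1 ≤ n + 1) (ha : 0 < a (n + 1)) :
    (∑ k ∈ Icc 1 (n + 1), (1 : ℚ) / a k).den ≤ (∑ k ∈ Icc 1 n, (1 : ℚ) / a k).den * a (n + 1) := by
  rw [sum_Icc_succ_top hn, one_div (a (n + 1) : ℚ)]
  exact Rat.den_add_inv_natCast_le _ ha

theorem Real.rpow_add_one_div_mul_le_of_rpow_add_one_le {x y α : ℝ} (hx : 0 ≤ x) (hy : 0 ≤ y) (hα : 0 < α)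
    (h : x ^ (α + 1) ≤ y) : x ^ ((α + 1) / α) * y ≤ y ^ ((α + 1) / α) := by
  have hroot : x ^ ((α + 1) / α) ≤ y ^ α⁻¹ := by
    rw [div_eq_mul_inv, Real.rpow_mul hx]
    exact Real.rpow_le_rpow (by positivity) h (by positivity)
  calc x ^ ((α + 1) / α) * y ≤ y ^ α⁻¹ * y := by gcongr
    _ = y ^ ((α + 1) / α) := by
      rw [add_div, div_self hα.ne', one_div, Real.rpow_add' hy (by positivity), Real.rpow_one,
        mul_comm]

/-- Let `(a_n)_{n≥1}` be a sequence of positive integers and `α > 1` a real number with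
`a_n^{α+1} ≤ a_{n+1}` for all `n ≥ 1`.  If `q_n` is the denominator of the `n`-th
partial sum `∑_{k=1}^n 1/a_k` in lowest terms, then `q_n ≤ a_n^{(α+1)/α}`. -/
theorem stmt_8 (a : ℕ → ℕ) (ha : ∀ n, 1 ≤ n → 0 < a n) (α : ℝ) (hα : 1 < α)
    (hgrow : ∀ n, 1 ≤ n → (a n : ℝ) ^ (α + 1) ≤ (a (n + 1) : ℝ)) :
    ∀ n, 1 ≤ n →
      (((∑ k ∈ Finset.Icc 1 n, (1 : ℚ) / (a k : ℚ)).den : ℝ)) ≤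
        (a n : ℝ) ^ ((α + 1) / α) := by
  have hα₀ : 0 < α := by linarith
  intro n hn
  induction n, hn using Nat.le_induction with
  | base =>
    rw [Icc_self, sum_singleton, one_div, Rat.inv_natCast_den_of_pos (ha 1 le_rfl)]
    apply Real.self_le_rpow_of_one_le (mod_cast ha 1 le_rfl)
    rw [le_div_iff₀ hα₀]
    linarith
  | succ n hn ih =>
    calc ((∑ k ∈ Icc 1 (n + 1), (1 : ℚ) / a k).den : ℝ)
        ≤ (∑ k ∈ Icc 1 n, (1 : ℚ) / a k).den * (a (n + 1) : ℝ) :=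
          mod_cast den_sum_Icc_inv_succ_le a (by omega) (ha (n + 1) (by omega))
      _ ≤ (a n : ℝ) ^ ((α + 1) / α) * a (n + 1) := by gcongr
      _ ≤ (a (n + 1) : ℝ) ^ ((α + 1) / α) :=
          Real.rpow_add_one_div_mul_le_of_rpow_add_one_le (by positivity) (by positivity) hα₀ (hgrow n hn)
end

section
/- Let (a_n)_{n≥1} be the sequence of positive integers defined by a_1 = 2 and a_{n+1} = a_n^4 for n ≥ 1, and let θ = ∑_{n=1}^∞ 1/a_n. Then for every nonzero polynomial P with integer coefficients of degree 2 and height H, one has |P(θ)| > 1/(6H)^{10}. -/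
/-!
Write `q_m = 2 ^ 4 ^ m = a_{m+1}`. The partial sum `θ_m = ∑_{i ≤ m} 1 / q_i` is `p_m / q_m` with
`p_m` odd, and `0 ≤ θ - θ_m ≤ 2 / q_m ^ 4`. For `P = c₂ X² + c₁ X + c₀` the integer
`q_m² P(θ_m)` either is nonzero, so that `|P(θ_m)| ≥ 1 / q_m²`, or vanishes, which forces
`q_m ∣ c₂` and so `q_m ≤ H`. As `P` is `3H`-Lipschitz on `[0, 1]`, `|P(θ)| ≥ 1 / (2 q_m²)` once
`q_m² ≥ 12 H` and `P(θ_m) ≠ 0`. The least `m` with `q_m² ≥ 12 H`, or `m + 1` if `P(θ_m) = 0`,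
satisfies `q_m² ≤ 12⁴ H⁸`, whence `|P(θ)| > 1 / (6H)^10`.
-/

open Finset Polynomial

/-- The height of an integer polynomial: the maximum of the absolute values of its
coefficients. -/
def polyHeight (P : Polynomial ℤ) : ℕ := P.support.sup fun i => (P.coeff i).natAbs

lemma natAbs_coeff_le_polyHeight (P : ℤ[X]) (i : ℕ) : (P.coeff i).natAbs ≤ polyHeight P := by
  by_cases h : P.coeff i = 0
  · simp [h]
  · exact Finset.le_sup (f := fun i => (P.coeff i).natAbs) (mem_support_iff.mpr h)

lemma abs_coeff_le_polyHeight (P : ℤ[X]) (i : ℕ) : |(P.coeff i : ℝ)| ≤ polyHeight P := by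
  rw [← Int.cast_abs, Int.abs_eq_natAbs]
  exact_mod_cast natAbs_coeff_le_polyHeight P i

lemma aeval_eq_of_natDegree_le_two {A : Type*} [Ring A] (P : ℤ[X]) (hP : P.natDegree ≤ 2)
    (x : A) : aeval x P = P.coeff 2 * x ^ 2 + P.coeff 1 * x + P.coeff 0 := by
  rw [aeval_eq_sum_range' (Nat.lt_succ_of_le hP)]
  simp only [zsmul_eq_mul, sum_range_succ, range_one, sum_singleton, pow_zero, mul_one, pow_one]
  abel

section Quadratic

variable {c₂ c₁ c₀ : ℝ} {H : ℝ}

lemma abs_quadratic_sub_le (hc₂ : |c₂| ≤ H) (hc₁ : |c₁| ≤ H) {x t : ℝ} (ht : 0 ≤ t)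
    (htx : t ≤ x) (hx : x ≤ 1) :
    |(c₂ * x ^ 2 + c₁ * x + c₀) - (c₂ * t ^ 2 + c₁ * t + c₀)| ≤ 3 * H * (x - t) := by
  have hfactor : (c₂ * x ^ 2 + c₁ * x + c₀) - (c₂ * t ^ 2 + c₁ * t + c₀)
      = (x - t) * (c₂ * (x + t) + c₁) := by ring
  have hslope : |c₂ * (x + t) + c₁| ≤ 3 * H :=
    calc |c₂ * (x + t) + c₁| ≤ |c₂| * (x + t) + |c₁| := by
          have := abs_add_le (c₂ * (x + t)) c₁
          rwa [abs_mul, abs_of_nonneg (by linarith : 0 ≤ x + t)] at this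
      _ ≤ H * 2 + H := by
          have hH : 0 ≤ H := (abs_nonneg _).trans hc₂
          gcongr <;> linarith
      _ = 3 * H := by ring
  rw [hfactor, abs_mul, abs_of_nonneg (by linarith : 0 ≤ x - t), mul_comm]
  exact mul_le_mul_of_nonneg_right hslope (by linarith)

lemma one_div_two_mul_sq_le_abs_quadratic (hc₂ : |c₂| ≤ H) (hc₁ : |c₁| ≤ H) {x t q : ℝ}
    (hq : 0 < q) (ht : 0 ≤ t) (htx : t ≤ x) (hx : x ≤ 1) (htail : x - t ≤ 2 / q ^ 4)
    (hH : 12 * H ≤ q ^ 2) (hft : 1 / q ^ 2 ≤ |c₂ * t ^ 2 + c₁ * t + c₀|) :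
    1 / (2 * q ^ 2) ≤ |c₂ * x ^ 2 + c₁ * x + c₀| := by
  have hH0 : 0 ≤ H := (abs_nonneg _).trans hc₂
  have hclose : 3 * H * (x - t) ≤ 1 / (2 * q ^ 2) :=
    calc 3 * H * (x - t) ≤ 3 * H * (2 / q ^ 4) := by gcongr
      _ = (12 * H) / (2 * q ^ 2 * q ^ 2) := by field_simp; ring
      _ ≤ q ^ 2 / (2 * q ^ 2 * q ^ 2) := by gcongr
      _ = 1 / (2 * q ^ 2) := by field_simp
  have hdiff := (abs_quadratic_sub_le (c₀ := c₀) hc₂ hc₁ ht htx hx).trans hclose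
  have htwo : 1 / q ^ 2 = 2 * (1 / (2 * q ^ 2)) := by field_simp
  linarith [abs_sub_abs_le_abs_sub (c₂ * t ^ 2 + c₁ * t + c₀) (c₂ * x ^ 2 + c₁ * x + c₀),
    abs_sub_comm (c₂ * t ^ 2 + c₁ * t + c₀) (c₂ * x ^ 2 + c₁ * x + c₀)]

end Quadratic

section IntegerQuadratic

variable {c₂ c₁ c₀ : ℤ}

lemma one_div_sq_le_abs_quadratic {p q : ℤ} (hq : q ≠ 0)
    (hZ : c₂ * p ^ 2 + c₁ * p * q + c₀ * q ^ 2 ≠ 0) :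
    1 / (q : ℝ) ^ 2 ≤ |c₂ * ((p : ℝ) / q) ^ 2 + c₁ * ((p : ℝ) / q) + c₀| := by
  have hq' : (q : ℝ) ≠ 0 := by exact_mod_cast hq
  have hval : (c₂ : ℝ) * ((p : ℝ) / q) ^ 2 + c₁ * ((p : ℝ) / q) + c₀
      = ((c₂ * p ^ 2 + c₁ * p * q + c₀ * q ^ 2 : ℤ) : ℝ) / (q : ℝ) ^ 2 := by
    push_cast; field_simp
  have hZ' : (1 : ℝ) ≤ |((c₂ * p ^ 2 + c₁ * p * q + c₀ * q ^ 2 : ℤ) : ℝ)| := by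
    rw [← Int.cast_abs]; exact_mod_cast Int.one_le_abs hZ
  rw [hval, abs_div, abs_of_pos (by positivity : (0 : ℝ) < (q : ℝ) ^ 2)]
  gcongr

lemma dvd_of_quadratic_eq_zero {p q : ℤ} (hpq : IsCoprime q p)
    (hZ : c₂ * p ^ 2 + c₁ * p * q + c₀ * q ^ 2 = 0) : q ∣ c₂ :=
  (hpq.pow_right (n := 2)).dvd_of_dvd_mul_right
    ⟨-(c₁ * p + c₀ * q), by linear_combination hZ⟩

end IntegerQuadratic

namespace Theta

/-- `den n = a (n + 1)`, and `num n / den n` is the `n`-th partial sum of `θ`. -/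
def den (n : ℕ) : ℕ := 2 ^ 4 ^ n

def num (n : ℕ) : ℕ := ∑ i ∈ range (n + 1), 2 ^ (4 ^ n - 4 ^ i)

lemma den_pos (n : ℕ) : 0 < den n := Nat.pow_pos two_pos

lemma den_succ (n : ℕ) : den (n + 1) = den n ^ 4 := by
  rw [den, den, ← pow_mul, pow_succ]

lemma apply_succ_eq_den {a : ℕ → ℕ} (h1 : a 1 = 2) (hrec : ∀ n, 1 ≤ n → a (n + 1) = a n ^ 4)
    (n : ℕ) : a (n + 1) = den n := by
  induction n with
  | zero => simpa [den] using h1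
  | succ n ih => rw [hrec (n + 1) (by omega), ih, den_succ]

lemma den_mul_two_pow_le (m n : ℕ) : den m * 2 ^ n ≤ den (n + m) := by
  rw [den, den, ← pow_add, pow_add 4 n m]
  apply Nat.pow_le_pow_right two_pos
  have h4n : n + 1 ≤ 4 ^ n := Nat.lt_pow_self (by norm_num)
  have h4m : 1 ≤ 4 ^ m := Nat.one_le_pow _ _ (by norm_num)
  nlinarith

lemma odd_num (n : ℕ) : Odd (num n) := by
  rw [num, sum_range_succ, Nat.sub_self, pow_zero]
  refine Even.add_one (even_sum _ fun i hi => (Nat.even_pow' ?_).mpr even_two)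
  have : 4 ^ i < 4 ^ n := Nat.pow_lt_pow_right (by norm_num) (mem_range.mp hi)
  omega

lemma isCoprime_den_num (n : ℕ) : IsCoprime (den n : ℤ) (num n) := by
  have h2 : IsCoprime (2 : ℤ) (num n) := by
    refine Int.prime_two.coprime_iff_not_dvd.mpr ?_
    rw [← even_iff_two_dvd, Int.not_even_iff_odd]
    exact_mod_cast odd_num n
  simpa [den] using h2.pow_left (m := 4 ^ n)

lemma sum_range_one_div_den (n : ℕ) :
    ∑ i ∈ range (n + 1), 1 / (den i : ℝ) = num n / den n := by
  rw [num, Nat.cast_sum, sum_div]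
  refine sum_congr rfl fun i hi => ?_
  have h4 : 4 ^ i ≤ 4 ^ n := Nat.pow_le_pow_right (by norm_num) (by have := mem_range.mp hi; omega)
  rw [den, den, div_eq_div_iff (by positivity) (by positivity), one_mul]
  push_cast
  rw [← pow_add, Nat.sub_add_cancel h4]

lemma sub_sum_range_nonneg_and_le {θ : ℝ} (hθ : HasSum (fun n => 1 / (den n : ℝ)) θ) (n : ℕ) :
    0 ≤ θ - ∑ i ∈ range (n + 1), 1 / (den i : ℝ) ∧
      θ - ∑ i ∈ range (n + 1), 1 / (den i : ℝ) ≤ 2 / (den (n + 1) : ℝ) := by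
  have htail := (hasSum_nat_add_iff' (n + 1)).mpr hθ
  refine ⟨htail.nonneg fun _ => by positivity, hasSum_le (fun k => ?_) htail
    (hasSum_geometric_two' (2 / (den (n + 1) : ℝ)))⟩
  have hle : ((den (n + 1) * 2 ^ k : ℕ) : ℝ) ≤ den (k + (n + 1)) := by
    exact_mod_cast den_mul_two_pow_le (n + 1) k
  push_cast at hle
  calc 1 / (den (k + (n + 1)) : ℝ) ≤ 1 / (den (n + 1) * 2 ^ k) :=
        one_div_le_one_div_of_le (by have := den_pos (n + 1); positivity) hle
    _ = 2 / den (n + 1) / 2 / 2 ^ k := by field_simp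

lemma exists_le_den_sq_lt_pow_four {N : ℕ} (hN : 4 < N) :
    ∃ m, N ≤ den m ^ 2 ∧ den m ^ 2 < N ^ 4 := by
  have hex : ∃ m, N ≤ den m ^ 2 := ⟨N, calc
    N ≤ 2 ^ 4 ^ N := (Nat.lt_pow_self (by norm_num)).le.trans
          (Nat.pow_le_pow_right two_pos (Nat.lt_pow_self (by norm_num)).le)
    _ ≤ den N ^ 2 := Nat.le_self_pow two_ne_zero _⟩
  obtain ⟨j, hj⟩ : ∃ j, Nat.find hex = j + 1 :=
    Nat.exists_eq_succ_of_ne_zero fun h => by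
      have := h ▸ Nat.find_spec hex
      simp only [den, pow_zero, pow_one, Nat.reducePow] at this
      omega
  have hjN : den j ^ 2 < N := not_le.mp (Nat.find_min hex (by omega))
  refine ⟨j + 1, hj ▸ Nat.find_spec hex, ?_⟩
  calc den (j + 1) ^ 2 = (den j ^ 2) ^ 4 := by rw [den_succ]; ring
    _ < N ^ 4 := Nat.pow_lt_pow_left hjN (by norm_num)

lemma exists_quadratic_num_den_ne_zero {c₂ c₁ c₀ : ℤ} {H : ℕ} (hc₂ : c₂ ≠ 0) (hH : c₂.natAbs ≤ H) :
    ∃ m, c₂ * (num m : ℤ) ^ 2 + c₁ * num m * den m + c₀ * (den m : ℤ) ^ 2 ≠ 0 ∧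
      12 * H ≤ den m ^ 2 ∧ den m ^ 2 ≤ 12 ^ 4 * H ^ 8 := by
  have hH1 : 1 ≤ H := (Int.natAbs_pos.mpr hc₂).trans_le hH
  have hroot : ∀ m, c₂ * (num m : ℤ) ^ 2 + c₁ * num m * den m + c₀ * (den m : ℤ) ^ 2 = 0 →
      den m ≤ H := fun m h =>
    (Nat.le_of_dvd (Int.natAbs_pos.mpr hc₂)
      (Int.natCast_dvd.mp (dvd_of_quadratic_eq_zero (isCoprime_den_num m) h))).trans hH
  obtain ⟨k, hk, hk'⟩ := exists_le_den_sq_lt_pow_four (N := 12 * H) (by omega)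
  have hsq : den k ^ 2 ≤ den (k + 1) := by
    rw [den_succ]; exact Nat.pow_le_pow_right (den_pos k) (by norm_num)
  by_cases hZk : c₂ * (num k : ℤ) ^ 2 + c₁ * num k * den k + c₀ * (den k : ℤ) ^ 2 = 0
  · have hkH := hroot k hZk
    refine ⟨k + 1, fun h => ?_, hk.trans (hsq.trans (Nat.le_self_pow two_ne_zero _)), ?_⟩
    · have := hroot (k + 1) h
      omega
    · calc den (k + 1) ^ 2 = den k ^ 8 := by rw [den_succ]; ring
        _ ≤ H ^ 8 := Nat.pow_le_pow_left hkH 8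
        _ ≤ 12 ^ 4 * H ^ 8 := Nat.le_mul_of_pos_left _ (by norm_num)
  · refine ⟨k, hZk, hk, hk'.le.trans ?_⟩
    rw [mul_pow]
    exact Nat.mul_le_mul_left _ (Nat.pow_le_pow_right hH1 (by norm_num))

lemma one_div_two_mul_den_sq_le_abs_quadratic {θ : ℝ} (hθ : HasSum (fun n => 1 / (den n : ℝ)) θ)
    {c₂ c₁ c₀ : ℤ} {H : ℝ} (hc₂ : |(c₂ : ℝ)| ≤ H) (hc₁ : |(c₁ : ℝ)| ≤ H) {m : ℕ}
    (hm : 12 * H ≤ (den m : ℝ) ^ 2)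
    (hZ : c₂ * (num m : ℤ) ^ 2 + c₁ * num m * den m + c₀ * (den m : ℤ) ^ 2 ≠ 0) :
    1 / (2 * (den m : ℝ) ^ 2) ≤ |c₂ * θ ^ 2 + c₁ * θ + c₀| := by
  have hθ1 : θ ≤ 1 := by
    have := (sub_sum_range_nonneg_and_le hθ 0).2
    norm_num [den] at this
    linarith
  obtain ⟨hlow, hhigh⟩ := sub_sum_range_nonneg_and_le hθ m
  rw [sum_range_one_div_den] at hlow hhigh
  rw [den_succ, Nat.cast_pow] at hhigh
  refine one_div_two_mul_sq_le_abs_quadratic hc₂ hc₁ (by exact_mod_cast den_pos m) (by positivity)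
    (by linarith) hθ1 hhigh hm ?_
  have := one_div_sq_le_abs_quadratic (c₂ := c₂) (c₁ := c₁) (c₀ := c₀)
    (Int.natCast_ne_zero.mpr (den_pos m).ne') hZ
  simpa only [Int.cast_natCast] using this

end Theta

lemma two_mul_twelve_pow_four_mul_pow_eight_lt {H : ℕ} (hH : 1 ≤ H) :
    2 * (12 ^ 4 * H ^ 8) < (6 * H) ^ 10 :=
  calc 2 * (12 ^ 4 * H ^ 8) < 6 ^ 10 * H ^ 8 := by
        have := Nat.one_le_pow 8 H hH
        omega
    _ ≤ 6 ^ 10 * H ^ 10 := Nat.mul_le_mul_left _ (Nat.pow_le_pow_right hH (by norm_num))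
    _ = (6 * H) ^ 10 := (mul_pow _ _ _).symm

open Theta in
/-- Let `(a_n)_{n≥1}` be given by `a_1 = 2`, `a_{n+1} = a_n^4` and
`θ = ∑_{n=1}^∞ 1/a_n`.  Then for every nonzero `P ∈ ℤ[X]` of degree `2` and
height `H` one has `|P(θ)| > 1/(6H)^{10}`. -/
theorem stmt_12 (a : ℕ → ℕ) (h1 : a 1 = 2) (hrec : ∀ n, 1 ≤ n → a (n + 1) = a n ^ 4)
    (θ : ℝ) (hθ : HasSum (fun n : ℕ => (1 : ℝ) / (a (n + 1) : ℝ)) θ) :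
    ∀ P : Polynomial ℤ, P ≠ 0 → P.natDegree = 2 →
      1 / (6 * (polyHeight P : ℝ)) ^ 10 < |(Polynomial.aeval θ) P| := by
  intro P hP hdeg
  simp only [apply_succ_eq_den h1 hrec] at hθ
  have hc₂ : P.coeff 2 ≠ 0 := by
    simpa [leadingCoeff, hdeg] using leadingCoeff_ne_zero.mpr hP
  obtain ⟨m, hZ, hlow, hhigh⟩ :=
    exists_quadratic_num_den_ne_zero (c₁ := P.coeff 1) (c₀ := P.coeff 0) hc₂
      (natAbs_coeff_le_polyHeight P 2)
  have hH : 1 ≤ polyHeight P :=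
    (Int.natAbs_pos.mpr hc₂).trans_le (natAbs_coeff_le_polyHeight P 2)
  have hden : (2 * den m ^ 2 : ℝ) < (6 * polyHeight P : ℝ) ^ 10 := by
    exact_mod_cast (Nat.mul_le_mul_left 2 hhigh).trans_lt
      (two_mul_twelve_pow_four_mul_pow_eight_lt hH)
  rw [aeval_eq_of_natDegree_le_two P hdeg.le]
  calc 1 / (6 * (polyHeight P : ℝ)) ^ 10 < 1 / (2 * (den m : ℝ) ^ 2) :=
        one_div_lt_one_div_of_lt (by have := den_pos m; positivity) hden
    _ ≤ _ := one_div_two_mul_den_sq_le_abs_quadratic hθ (abs_coeff_le_polyHeight P 2)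
        (abs_coeff_le_polyHeight P 1) (by exact_mod_cast hlow) hZ
end
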